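/- arXiv:2006.01761 — 4 statements merged into one kernel-verified Lean document; each statement's English description precedes it below -/
import Mathlib

section
/- Let Ω be a holomorphic 1-form on an open subset of ℂⁿ satisfying the integrability condition Ω ∧ dΩ = 0, and let X be a holomorphic vector field such that the Lie derivative L_X Ω = v·Ω for some holomorphic function v. If f := i_X Ω (the contraction of Ω by X) is not identically zero, then f·dΩ = df ∧ Ω, i.e. on the set where f ≠ 0 the form (1/f)·Ω is closed. -/
/-- Let `Ω` be a holomorphic 1-form on an open set `U ⊆ ℂⁿ` satisfying the
integrability condition `Ω ∧ dΩ = 0`, let `X` be a holomorphic vector field such that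
`L_X Ω = i_X dΩ + d(i_X Ω) = v·Ω` (Cartan's formula), and let `f := i_X Ω`.  If `f` is not
identically zero then `f·dΩ = df ∧ Ω`, i.e. on the set where `f ≠ 0` the form `(1/f)·Ω` is
closed.  Forms are represented by their pointwise values: `Ω z` is a linear form,
`dΩ z` an antisymmetric bilinear form, `df z` the differential of `f`. -/
theorem stmt0 {n : ℕ} (U : Set (Fin n → ℂ)) (hU : IsOpen U)
    (Ω : (Fin n → ℂ) → (Fin n → ℂ) → ℂ)
    (dΩ : (Fin n → ℂ) → (Fin n → ℂ) → (Fin n → ℂ) → ℂ)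
    (X : (Fin n → ℂ) → (Fin n → ℂ))
    (v f : (Fin n → ℂ) → ℂ)
    (df : (Fin n → ℂ) → (Fin n → ℂ) → ℂ)
    (halt : ∀ z ∈ U, ∀ a b, dΩ z a b = - dΩ z b a)
    -- integrability `Ω ∧ dΩ = 0`:
    (hint : ∀ z ∈ U, ∀ a b c,
      Ω z a * dΩ z b c - Ω z b * dΩ z a c + Ω z c * dΩ z a b = 0)
    -- `f = i_X Ω`:
    (hf : ∀ z ∈ U, f z = Ω z (X z))
    -- Lie derivative hypothesis `L_X Ω = i_X dΩ + d (i_X Ω) = v • Ω`: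
    (hLie : ∀ z ∈ U, ∀ b, dΩ z (X z) b + df z b = v z * Ω z b)
    -- `f` is not identically zero:
    (hne : ∃ z ∈ U, f z ≠ 0) :
    ∀ z ∈ U, ∀ a b, f z * dΩ z a b = df z a * Ω z b - df z b * Ω z a := by
  intro z hz a b
  have h1 := hint z hz (X z) a b
  have h2 := hLie z hz a
  have h3 := hLie z hz b
  have hfz := hf z hz
  linear_combination (dΩ z a b) * hfz + h1 + Ω z a * h3 - Ω z b * h2
end

section
/- Let f ∈ ℂ[[z₁,…,zₙ]] be a formal power series whose lowest-order nonzero homogeneous component is h of degree k, and suppose R(f) = u·f where R = ∑ z_i ∂/∂z_i is the radial (Euler) derivation and u ∈ ℂ[[z₁,…,zₙ]] is a unit with u(0) = k. Then h divides f in ℂ[[z₁,…,zₙ]]; more precisely f = v·h for some unit v. -/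
open Finset

namespace Stmt5Aux

variable {n : ℕ}

lemma deg_eq (m : Fin n →₀ ℕ) : (m.sum fun _ e => e) = m.degree := by
  rfl

lemma deg_add (a b : Fin n →₀ ℕ) : (a + b).degree = a.degree + b.degree := by
  simp [Finsupp.degree_eq_weight_one, map_add]

lemma deg_pos {m : Fin n →₀ ℕ} (hm : m ≠ 0) : 0 < m.degree :=
  Nat.pos_of_ne_zero fun h => hm ((Finsupp.degree_eq_zero_iff m).mp h)

/-- Coefficients of the unit `v`, defined by the recursion
`|m| ⬝ c m = ∑_{a+b=m} w_a c_b` (valid when `w₀ = 0`). -/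
noncomputable def cf (w : MvPowerSeries (Fin n) ℂ) (m : Fin n →₀ ℕ) : ℂ :=
  if hm : m = 0 then 1
  else ((m.degree : ℕ) : ℂ)⁻¹ *
    ∑ p ∈ (Finset.HasAntidiagonal.antidiagonal m).attach,
      if p.1.1 = 0 then 0
      else MvPowerSeries.coeff p.1.1 w * cf w p.1.2
termination_by m.degree
decreasing_by
  have hp := Finset.HasAntidiagonal.mem_antidiagonal.mp p.2
  have : p.1.1.degree + p.1.2.degree = m.degree := by rw [← deg_add, hp]
  have h1 : 0 < p.1.1.degree := deg_pos (by assumption)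
  omega

noncomputable def vser (w : MvPowerSeries (Fin n) ℂ) : MvPowerSeries (Fin n) ℂ :=
  fun m => cf w m

lemma coeff_cf (w : MvPowerSeries (Fin n) ℂ) (m : Fin n →₀ ℕ) :
    MvPowerSeries.coeff m (vser w) = cf w m := rfl

lemma cf_zero (w : MvPowerSeries (Fin n) ℂ) : cf w 0 = 1 := by
  rw [cf]; simp

lemma cf_spec (w : MvPowerSeries (Fin n) ℂ) (hw0 : MvPowerSeries.coeff 0 w = 0)
    (m : Fin n →₀ ℕ) :
    ((m.degree : ℕ) : ℂ) * cf w m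
      = MvPowerSeries.coeff m (w * (vser w)) := by
  rw [MvPowerSeries.coeff_mul]
  by_cases hm : m = 0
  · subst hm
    simp [Finsupp.antidiagonal_zero, hw0, map_zero]
  · have hS : ∑ p ∈ Finset.HasAntidiagonal.antidiagonal m,
        MvPowerSeries.coeff p.1 w * MvPowerSeries.coeff p.2 (vser w)
        = ∑ p ∈ (Finset.HasAntidiagonal.antidiagonal m).attach,
            if p.1.1 = 0 then 0 else MvPowerSeries.coeff p.1.1 w * cf w p.1.2 := by
      rw [← Finset.sum_attach (Finset.HasAntidiagonal.antidiagonal m)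
        (fun p => MvPowerSeries.coeff p.1 w * MvPowerSeries.coeff p.2 (vser w))]
      refine Finset.sum_congr rfl fun p _ => ?_
      by_cases h1 : p.1.1 = 0
      · simp [h1, hw0]
      · simp [h1, coeff_cf]
    rw [hS]
    conv_lhs => rw [cf]
    rw [dif_neg hm, ← mul_assoc, mul_inv_cancel₀, one_mul]
    exact Nat.cast_ne_zero.mpr (Nat.pos_iff_ne_zero.mp (deg_pos hm))

lemma coeff_coe_eq_zero {k : ℕ} {h : MvPolynomial (Fin n) ℂ} (hh : h.IsHomogeneous k)
    {m : Fin n →₀ ℕ} (hm : m.degree ≠ k) :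
    MvPowerSeries.coeff m (h : MvPowerSeries (Fin n) ℂ) = 0 := by
  rw [MvPolynomial.coeff_coe]; exact hh.coeff_eq_zero hm

lemma deg_mul_coe {k : ℕ} {h : MvPolynomial (Fin n) ℂ} (hh : h.IsHomogeneous k)
    (m : Fin n →₀ ℕ) :
    ((m.degree : ℕ) : ℂ) * MvPowerSeries.coeff m (h : MvPowerSeries (Fin n) ℂ)
      = (k : ℂ) * MvPowerSeries.coeff m (h : MvPowerSeries (Fin n) ℂ) := by
  by_cases hc : MvPowerSeries.coeff m (h : MvPowerSeries (Fin n) ℂ) = 0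
  · rw [hc, mul_zero, mul_zero]
  · have : m.degree = k := by
      by_contra hne
      exact hc (coeff_coe_eq_zero hh hne)
    rw [this]

/-- Euler identity for `g = v * h`. -/
lemma euler_g {k : ℕ} (w : MvPowerSeries (Fin n) ℂ)
    (hw0 : MvPowerSeries.coeff 0 w = 0)
    {h : MvPolynomial (Fin n) ℂ} (hh : h.IsHomogeneous k) (m : Fin n →₀ ℕ) :
    ((m.degree : ℕ) : ℂ) *
        MvPowerSeries.coeff m (vser w * (h : MvPowerSeries (Fin n) ℂ))
      = MvPowerSeries.coeff m
          ((w + MvPowerSeries.C (k : ℂ)) * (vser w * (h : MvPowerSeries (Fin n) ℂ))) := by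
  have key : ((m.degree : ℕ) : ℂ) *
      MvPowerSeries.coeff m (vser w * (h : MvPowerSeries (Fin n) ℂ))
      = MvPowerSeries.coeff m ((w * vser w) * (h : MvPowerSeries (Fin n) ℂ))
        + (k : ℂ) * MvPowerSeries.coeff m (vser w * (h : MvPowerSeries (Fin n) ℂ)) := by
    rw [MvPowerSeries.coeff_mul (φ := w * vser w), MvPowerSeries.coeff_mul (φ := vser w),
      Finset.mul_sum, Finset.mul_sum, ← Finset.sum_add_distrib]
    refine Finset.sum_congr rfl fun p hp => ?_
    have hpm : p.1 + p.2 = m := Finset.HasAntidiagonal.mem_antidiagonal.mp hp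
    have hdeg : m.degree = p.1.degree + p.2.degree := by rw [← hpm, deg_add]
    have h2 : ((p.2.degree : ℕ) : ℂ) * h.coeff p.2 = (k : ℂ) * h.coeff p.2 := by
      by_cases hc : h.coeff p.2 = 0
      · rw [hc, mul_zero, mul_zero]
      · have : p.2.degree = k := by
          by_contra hne
          exact hc (hh.coeff_eq_zero hne)
        rw [this]
    rw [coeff_cf, hdeg]
    push_cast
    rw [add_mul, ← mul_assoc, cf_spec w hw0 p.1, mul_left_comm (((p.2.degree : ℕ)) : ℂ), h2,
      mul_left_comm (cf w p.1)]
  rw [key, add_mul, map_add, mul_assoc, MvPowerSeries.coeff_C_mul]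

/-- low-degree coefficients of `v * h`. -/
lemma coeff_g_low {k : ℕ} (w : MvPowerSeries (Fin n) ℂ)
    {h : MvPolynomial (Fin n) ℂ} (hh : h.IsHomogeneous k) {m : Fin n →₀ ℕ}
    (hm : m.degree ≤ k) :
    MvPowerSeries.coeff m (vser w * (h : MvPowerSeries (Fin n) ℂ))
      = if m.degree = k then h.coeff m else 0 := by
  rw [MvPowerSeries.coeff_mul]
  rw [Finset.sum_eq_single ((0 : Fin n →₀ ℕ), m)]
  · rw [coeff_cf, cf_zero, one_mul, MvPolynomial.coeff_coe]
    by_cases hd : m.degree = k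
    · simp [hd]
    · rw [if_neg hd, hh.coeff_eq_zero hd]
  · intro p hp hne
    have hpm : p.1 + p.2 = m := Finset.HasAntidiagonal.mem_antidiagonal.mp hp
    have h1 : p.1 ≠ 0 := by
      intro h0
      rw [h0, zero_add] at hpm
      exact hne (Prod.ext h0 hpm)
    have : p.2.degree < k := by
      have := deg_pos h1
      have h2 : p.1.degree + p.2.degree = m.degree := by rw [← deg_add, hpm]
      omega
    rw [coeff_coe_eq_zero hh this.ne, mul_zero]
  · intro habs
    exact absurd (Finset.HasAntidiagonal.mem_antidiagonal.mpr (zero_add m)) habs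

/-- uniqueness: a solution of the Euler equation vanishing in degrees `≤ k` is zero. -/
lemma euler_unique {k : ℕ} (u z : MvPowerSeries (Fin n) ℂ)
    (hu : MvPowerSeries.coeff 0 u = (k : ℂ))
    (hz : ∀ m : Fin n →₀ ℕ, m.degree ≤ k → MvPowerSeries.coeff m z = 0)
    (hE : ∀ m : Fin n →₀ ℕ, ((m.degree : ℕ) : ℂ) * MvPowerSeries.coeff m z
        = MvPowerSeries.coeff m (u * z)) :
    z = 0 := by
  have main : ∀ d : ℕ, ∀ m : Fin n →₀ ℕ, m.degree = d → MvPowerSeries.coeff m z = 0 := by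
    intro d
    induction d using Nat.strong_induction_on with
    | _ d ih =>
      intro m hmd
      by_cases hdk : d ≤ k
      · exact hz m (hmd ▸ hdk)
      · have hsum : MvPowerSeries.coeff m (u * z) = (k : ℂ) * MvPowerSeries.coeff m z := by
          rw [MvPowerSeries.coeff_mul]
          rw [Finset.sum_eq_single ((0 : Fin n →₀ ℕ), m)]
          · rw [hu]
          · intro p hp hne
            have hpm : p.1 + p.2 = m := Finset.HasAntidiagonal.mem_antidiagonal.mp hp
            have h1 : p.1 ≠ 0 := by
              intro h0
              rw [h0, zero_add] at hpm
              exact hne (Prod.ext h0 hpm)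
            have hlt : p.2.degree < d := by
              have := deg_pos h1
              have h2 : p.1.degree + p.2.degree = m.degree := by rw [← deg_add, hpm]
              omega
            rw [ih _ hlt _ rfl, mul_zero]
          · intro habs
            exact absurd (Finset.HasAntidiagonal.mem_antidiagonal.mpr (zero_add m)) habs
        have := hE m
        rw [hsum, hmd] at this
        have hfac : ((d : ℂ) - (k : ℂ)) * MvPowerSeries.coeff m z = 0 := by
          rw [sub_mul, this, sub_self]
        have hne : ((d : ℂ) - (k : ℂ)) ≠ 0 := by
          have : (d : ℂ) ≠ (k : ℂ) := by
            exact_mod_cast fun hh => hdk (le_of_eq hh)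
          exact sub_ne_zero.mpr this
        exact (mul_eq_zero.mp hfac).resolve_left hne
  ext m
  rw [main m.degree m rfl, map_zero]

end Stmt5Aux

open Stmt5Aux in

/-- let `f ∈ ℂ[[z₁,…,zₙ]]` have lowest nonzero homogeneous component `h`
of degree `k`, and suppose `R(f) = u·f` where `R = ∑ zᵢ ∂/∂zᵢ` is the Euler derivation
(so that `R(f)` has coefficient `(∑ᵢ mᵢ)·(coeff of f)` on each monomial `m`) and `u` is
a unit with constant term `k`.  Then `h` divides `f`; more precisely `f = v·h` with `v`
a unit. -/
theorem stmt5 {n k : ℕ} (f u : MvPowerSeries (Fin n) ℂ)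
    (h : MvPolynomial (Fin n) ℂ) (hh : h.IsHomogeneous k) (hh0 : h ≠ 0)
    -- `h` is the lowest nonzero homogeneous component of `f`, of degree `k`:
    (hlow : ∀ m : Fin n →₀ ℕ, (m.sum fun _ e => e) < k → MvPowerSeries.coeff m f = 0)
    (hk : ∀ m : Fin n →₀ ℕ, (m.sum fun _ e => e) = k →
      MvPowerSeries.coeff m f = h.coeff m)
    -- `u` is a unit with `u(0) = k`:
    (hu : MvPowerSeries.constantCoeff u = (k : ℂ)) (huu : IsUnit u)
    -- the Euler equation `R(f) = u·f`, coefficientwise: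
    (hEuler : ∀ m : Fin n →₀ ℕ,
      (((m.sum fun _ e => e : ℕ)) : ℂ) * MvPowerSeries.coeff m f
        = MvPowerSeries.coeff m (u * f)) :
    ∃ v : MvPowerSeries (Fin n) ℂ, IsUnit v ∧ f = v * (h : MvPowerSeries (Fin n) ℂ) := by
  simp only [deg_eq] at hlow hk hEuler
  set w : MvPowerSeries (Fin n) ℂ := u - MvPowerSeries.C (k : ℂ) with hw
  have hw0 : MvPowerSeries.coeff 0 w = 0 := by
    simp [hw, MvPowerSeries.coeff_zero_eq_constantCoeff, hu]
  have huC : u = w + MvPowerSeries.C (k : ℂ) := by rw [hw]; ring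
  refine ⟨vser w, ?_, ?_⟩
  · rw [MvPowerSeries.isUnit_iff_constantCoeff]
    have : MvPowerSeries.constantCoeff (vser w) = 1 := by
      rw [← MvPowerSeries.coeff_zero_eq_constantCoeff, coeff_cf, cf_zero]
    rw [this]
    exact isUnit_one
  · have hzero : f - vser w * (h : MvPowerSeries (Fin n) ℂ) = 0 := by
      apply euler_unique u _ (by rw [MvPowerSeries.coeff_zero_eq_constantCoeff, hu])
      · intro m hm
        rw [map_sub]
        rcases lt_or_eq_of_le hm with hlt | heq
        · rw [hlow m hlt, coeff_g_low w hh hm, if_neg hlt.ne, sub_self]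
        · rw [hk m heq, coeff_g_low w hh hm, if_pos heq, sub_self]
      · intro m
        rw [map_sub, mul_sub, mul_sub u, map_sub, ← hEuler m]
        congr 1
        rw [huC]
        exact euler_g w hw0 hh m
    have := sub_eq_zero.mp hzero
    exact this
end

section
/- The pair H₂ = (z₁·z₂²·z₃³⋯zₙⁿ, z₁ + z₂ + ⋯ + zₙ) of homogeneous polynomials on ℂⁿ is rigid: any T ∈ GL(n,ℂ) with (z₁z₂²⋯zₙⁿ) ∘ T = α·(z₁z₂²⋯zₙⁿ) and (z₁+⋯+zₙ) ∘ T = β·(z₁+⋯+zₙ) for some α, β ∈ ℂ* must be a scalar multiple of the identity. -/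
/-- the pair `H₂ = (z₁·z₂²·z₃³⋯zₙⁿ, z₁ + ⋯ + zₙ)` of homogeneous
polynomials on `ℂⁿ` is rigid: any `T ∈ GL(n,ℂ)` with
`(z₁z₂²⋯zₙⁿ) ∘ T = α·(z₁z₂²⋯zₙⁿ)` and `(z₁+⋯+zₙ) ∘ T = β·(z₁+⋯+zₙ)` for some
`α, β ∈ ℂ*` is a scalar multiple of the identity. -/
theorem stmt11 {n : ℕ}
    (T : (Fin n → ℂ) →ₗ[ℂ] (Fin n → ℂ)) (hT : Function.Bijective T)
    (α β : ℂ) (hα : α ≠ 0) (hβ : β ≠ 0)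
    (hmono : ∀ z, (∏ i, (T z i) ^ ((i : ℕ) + 1)) = α * ∏ i, (z i) ^ ((i : ℕ) + 1))
    (hsum : ∀ z, (∑ i, T z i) = β * ∑ i, z i) :
    ∃ ρ : ℂ, ρ ≠ 0 ∧ ∀ z, T z = ρ • z := by
  classical
  set A : Fin n → Fin n → ℂ := fun i j => T (Pi.single j 1) i with hAdef
  -- expansion of T in coordinates
  have hexpand : ∀ (z : Fin n → ℂ) (i : Fin n), T z i = ∑ j, z j * A i j := by
    intro z i
    have hz : z = ∑ j, z j • (Pi.single j (1:ℂ) : Fin n → ℂ) := by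
      funext l
      simp [Finset.sum_apply, Pi.single_apply]
    calc T z i = T (∑ j, z j • (Pi.single j (1:ℂ) : Fin n → ℂ)) i := by rw [← hz]
      _ = ∑ j, z j * A i j := by
          rw [map_sum]
          simp [Finset.sum_apply, A, smul_eq_mul]
  -- if all coordinates of z are nonzero, so are all coordinates of T z
  have hnz : ∀ z : Fin n → ℂ, (∀ j, z j ≠ 0) → ∀ i, T z i ≠ 0 := by
    intro z hz i hzero
    have h1 : α * ∏ j, z j ^ ((j : ℕ) + 1) ≠ 0 :=
      mul_ne_zero hα (Finset.prod_ne_zero_iff.2 fun j _ => pow_ne_zero _ (hz j))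
    rw [← hmono z] at h1
    exact h1 (Finset.prod_eq_zero (Finset.mem_univ i) (by simp [hzero]))
  -- each row of A has at most one nonzero entry
  have huniq : ∀ i j k, j ≠ k → A i j ≠ 0 → A i k ≠ 0 → False := by
    intro i j k hjk hj hk
    set s : ℂ := ∑ l ∈ (Finset.univ.erase j).erase k, A i l with hs
    obtain ⟨x, hx0, hxs⟩ : ∃ x : ℂ, x ≠ 0 ∧ A i j * x + s ≠ 0 := by
      by_cases h : A i j * 1 + s = 0
      · refine ⟨2, two_ne_zero, ?_⟩
        intro h2
        apply hj
        have := sub_eq_zero.2 (h2.trans h.symm)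
        ring_nf at this ⊢
        linear_combination this
      · exact ⟨1, one_ne_zero, h⟩
    set y : ℂ := -(A i j * x + s) / A i k with hy
    have hy0 : y ≠ 0 := div_ne_zero (neg_ne_zero.2 hxs) hk
    set z : Fin n → ℂ := fun l => if l = j then x else if l = k then y else 1 with hzdef
    have hzall : ∀ l, z l ≠ 0 := by
      intro l
      simp only [z]
      split_ifs with h1 h2
      · exact hx0
      · exact hy0
      · exact one_ne_zero
    have hTzi : T z i = 0 := by
      rw [hexpand]
      have h1 : ∑ l, z l * A i l
          = z j * A i j + ∑ l ∈ Finset.univ.erase j, z l * A i l :=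
        (Finset.add_sum_erase _ _ (Finset.mem_univ j)).symm
      have hkmem : k ∈ Finset.univ.erase j := Finset.mem_erase.2 ⟨hjk.symm, Finset.mem_univ k⟩
      have h2 : ∑ l ∈ Finset.univ.erase j, z l * A i l
          = z k * A i k + ∑ l ∈ (Finset.univ.erase j).erase k, z l * A i l :=
        (Finset.add_sum_erase _ _ hkmem).symm
      have h3 : ∑ l ∈ (Finset.univ.erase j).erase k, z l * A i l = s := by
        rw [hs]
        refine Finset.sum_congr rfl fun l hl => ?_
        have hlk := (Finset.mem_erase.1 hl).1
        have hlj := (Finset.mem_erase.1 (Finset.mem_erase.1 hl).2).1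
        simp [z, hlj, hlk]
      have hzj : z j = x := by simp [z]
      have hzk : z k = y := by simp [z, hjk.symm]
      rw [h1, h2, h3, hzj, hzk, hy]
      field_simp
      ring
    exact hnz z hzall i hTzi
  -- each row has at least one nonzero entry
  have hex : ∀ i, ∃ j, A i j ≠ 0 := by
    intro i
    by_contra h
    push_neg at h
    have h1 : T (fun _ => 1) i = 0 := by
      rw [hexpand]; simp [h]
    exact hnz (fun _ => 1) (fun _ => one_ne_zero) i h1
  choose σ hσ using hex
  have hA0 : ∀ i j, j ≠ σ i → A i j = 0 := by
    intro i j hj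
    by_contra h
    exact huniq i j (σ i) hj h (hσ i)
  have hTz : ∀ (z : Fin n → ℂ) i, T z i = A i (σ i) * z (σ i) := by
    intro z i
    rw [hexpand]
    rw [Finset.sum_eq_single (σ i)]
    · ring
    · intro b _ hb
      rw [hA0 i b hb, mul_zero]
    · intro h; exact absurd (Finset.mem_univ _) h
  -- σ is surjective, hence injective
  have hσsurj : Function.Surjective σ := by
    intro j
    by_contra h
    push_neg at h
    have h1 : T (Pi.single j 1) = 0 := by
      funext i
      rw [hTz]
      have : (Pi.single j (1:ℂ) : Fin n → ℂ) (σ i) = 0 :=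
        Pi.single_eq_of_ne (h i) 1
      rw [this, mul_zero]; rfl
    have h2 : (Pi.single j (1:ℂ) : Fin n → ℂ) = 0 := by
      have := hT.injective (h1.trans (map_zero T).symm)
      exact this
    have := congrFun h2 j
    simp at this
  have hσinj : Function.Injective σ := Finite.injective_iff_surjective.2 hσsurj
  -- the normalizing constant
  have hones : (∏ k, A k (σ k) ^ ((k : ℕ) + 1)) = α := by
    have h := hmono (fun _ => 1)
    simp only [hTz] at h
    simpa using h
  -- σ is the identity
  have hσid : ∀ i, σ i = i := by
    intro i
    set z : Fin n → ℂ := fun l => if l = σ i then 2 else 1 with hzdef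
    have h := hmono z
    have hL : (∏ k, (T z k) ^ ((k : ℕ) + 1)) = α * 2 ^ ((i : ℕ) + 1) := by
      have : ∀ k, T z k = A k (σ k) * z (σ k) := fun k => hTz z k
      simp only [this]
      have hzs : ∀ k, z (σ k) = if k = i then 2 else 1 := by
        intro k
        by_cases hk : k = i
        · simp [z, hk]
        · have : σ k ≠ σ i := fun hc => hk (hσinj hc)
          simp [z, this, hk]
      simp only [hzs]
      rw [show (∏ k, (A k (σ k) * if k = i then 2 else 1) ^ ((k : ℕ) + 1))
          = (∏ k, A k (σ k) ^ ((k : ℕ) + 1)) * ∏ k, (if k = i then (2:ℂ) else 1) ^ ((k : ℕ) + 1) by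
          rw [← Finset.prod_mul_distrib]
          exact Finset.prod_congr rfl fun k _ => (mul_pow _ _ _)]
      rw [hones]
      congr 1
      rw [Finset.prod_eq_single i]
      · simp
      · intro b _ hb; simp [hb]
      · intro h; exact absurd (Finset.mem_univ _) h
    have hR : α * ∏ j, z j ^ ((j : ℕ) + 1) = α * 2 ^ ((σ i : ℕ) + 1) := by
      congr 1
      rw [Finset.prod_eq_single (σ i)]
      · simp [z]
      · intro b _ hb; simp [z, hb]
      · intro h; exact absurd (Finset.mem_univ _) h
    rw [hL, hR] at h
    have h2 : (2:ℂ) ^ ((i : ℕ) + 1) = 2 ^ ((σ i : ℕ) + 1) := mul_left_cancel₀ hα h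
    have h3 : ((2 ^ ((i : ℕ) + 1) : ℕ) : ℂ) = ((2 ^ ((σ i : ℕ) + 1) : ℕ) : ℂ) := by
      push_cast; exact h2
    have h4 : (2 : ℕ) ^ ((i : ℕ) + 1) = 2 ^ ((σ i : ℕ) + 1) := Nat.cast_injective h3
    have h5 : (i : ℕ) + 1 = (σ i : ℕ) + 1 := Nat.pow_right_injective (le_refl 2) h4
    exact Fin.ext (Nat.succ_injective h5).symm
  -- diagonal entries equal β
  have hTz' : ∀ (z : Fin n → ℂ) i, T z i = A i i * z i := by
    intro z i
    rw [hTz z i, hσid i]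
  have hdiag : ∀ j, A j j = β := by
    intro j
    have h := hsum (Pi.single j 1)
    simp only [hTz'] at h
    rw [Finset.sum_eq_single j] at h
    · simp at h
      simpa using h
    · intro b _ hb
      rw [Pi.single_eq_of_ne hb, mul_zero]
    · intro h'; exact absurd (Finset.mem_univ _) h'
  refine ⟨β, hβ, fun z => ?_⟩
  funext i
  rw [hTz' z i, hdiag i]
  rfl
end

section
/- Let f₁ ∈ ℂ[[z₁,…,zₙ]] with lowest nonzero homogeneous jet h₁ of degree k₁, let ρ be a primitive ℓ-th root of unity with ℓ > k₁, and suppose f₁ ∘ (ρ·I) = u·f₁ for some formal unit u. Then h₁ divides the (ℓ + k₁ − 1)-jet of f₁; i.e. writing f₁ = ∑_{i≥k₁} g_i in homogeneous components, h₁ divides g_i for all k₁ ≤ i ≤ ℓ + k₁ − 1. -/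
/-- let `f₁ ∈ ℂ[[z₁,…,zₙ]]` with homogeneous components `g i` and lowest
nonzero component `h₁ = g k₁` of degree `k₁`, let `ρ` be a primitive `ℓ`-th root of
unity with `ℓ > k₁`, and suppose `f₁ ∘ (ρ·I) = u·f₁` for a formal unit `u`
(coefficientwise, `ρ^{deg m}·coeff_m f₁ = coeff_m (u·f₁)`).  Then `h₁` divides `g i`
for all `k₁ ≤ i ≤ ℓ + k₁ − 1`, i.e. `h₁` divides the `(ℓ + k₁ − 1)`-jet of `f₁`. -/
theorem stmt16 {n k₁ ℓ : ℕ} (hk : k₁ < ℓ)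
    (ρ : ℂ) (hρ : IsPrimitiveRoot ρ ℓ)
    (f u : MvPowerSeries (Fin n) ℂ)
    (hu0 : MvPowerSeries.constantCoeff u ≠ 0)
    (g : ℕ → MvPolynomial (Fin n) ℂ)
    (hghom : ∀ i, (g i).IsHomogeneous i)
    (hgf : ∀ m : Fin n →₀ ℕ,
      MvPowerSeries.coeff m f = (g (m.sum fun _ e => e)).coeff m)
    (h₁ : MvPolynomial (Fin n) ℂ) (hh₁ : h₁ = g k₁) (hne : h₁ ≠ 0)
    (hlow : ∀ i < k₁, g i = 0)
    (heq : ∀ m : Fin n →₀ ℕ,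
      ρ ^ (m.sum fun _ e => e) * MvPowerSeries.coeff m f
        = MvPowerSeries.coeff m (u * f)) :
    ∀ i, k₁ ≤ i → i ≤ ℓ + k₁ - 1 → h₁ ∣ g i := by
  classical
  have hℓ1 : 1 ≤ ℓ := Nat.one_le_of_lt (Nat.lt_of_le_of_lt (Nat.zero_le _) hk)
  have hdeg : ∀ m : Fin n →₀ ℕ, (m.sum fun _ e => e) = m.degree := fun m => rfl
  have hdegadd : ∀ a b : Fin n →₀ ℕ, (a + b).degree = a.degree + b.degree := by
    intro a b
    simp [Finsupp.degree_eq_weight_one, map_add]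
  -- dispose of the case `n = 0`
  rcases Nat.eq_zero_or_pos n with rfl | hn
  · intro i hki hi
    rcases eq_or_lt_of_le hki with rfl | hlt
    · exact hh₁ ▸ dvd_rfl
    · have : g i = 0 := by
        ext m
        rw [(hghom i).coeff_eq_zero, MvPolynomial.coeff_zero]
        have hm : m = 0 := Subsingleton.elim m 0
        subst hm
        simpa [map_zero] using (Nat.lt_of_le_of_lt (Nat.zero_le _) hlt).ne
      rw [this]
      exact dvd_zero _
  -- main case `0 < n`
  set N : Fin n →₀ ℕ := Finsupp.equivFunOnFinite.symm (fun _ => ℓ + k₁) with hN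
  have hNapp : ∀ j, N j = ℓ + k₁ := fun j => rfl
  have hmN : ∀ m : Fin n →₀ ℕ, m.degree ≤ ℓ + k₁ - 1 → m < N := by
    intro m hm
    have hle : m ≤ N := by
      intro j
      have h1 : m j ≤ m.degree := Finsupp.le_degree j m
      rw [hNapp]
      omega
    refine lt_of_le_of_ne hle ?_
    intro hmn
    have h1 : m ⟨0, hn⟩ ≤ m.degree := Finsupp.le_degree _ m
    have h2 : m ⟨0, hn⟩ = ℓ + k₁ := by rw [hmn]; exact hNapp _
    omega
  set T : MvPolynomial (Fin n) ℂ := MvPowerSeries.trunc ℂ N u with hT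
  set W : ℕ → MvPolynomial (Fin n) ℂ := fun j => MvPolynomial.homogeneousComponent j T
    with hW
  have hWcoeff : ∀ j (m : Fin n →₀ ℕ), m.degree = j → m < N →
      (W j).coeff m = MvPowerSeries.coeff m u := by
    intro j m hmj hmN'
    rw [hW]
    simp only [MvPolynomial.coeff_homogeneousComponent, hmj, if_true, hT,
      MvPowerSeries.coeff_trunc, hmN', if_pos]
  have hWhom : ∀ j, (W j).IsHomogeneous j := fun j =>
    MvPolynomial.homogeneousComponent_isHomogeneous j T
  -- the key identity
  have key : ∀ i, k₁ ≤ i → i ≤ ℓ + k₁ - 1 →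
      MvPolynomial.C (ρ ^ i) * g i = ∑ s ∈ Finset.Icc k₁ i, W (i - s) * g s := by
    intro i hki hi
    ext m
    rw [MvPolynomial.coeff_C_mul, MvPolynomial.coeff_sum]
    by_cases hm : m.degree = i
    · -- degree-`i` coefficients
      have hRHS : ∀ s ∈ Finset.Icc k₁ i,
          (W (i - s) * g s).coeff m
            = ∑ p ∈ Finset.HasAntidiagonal.antidiagonal m,
                (W (i - s)).coeff p.1 * (g s).coeff p.2 := by
        intro s _
        exact MvPolynomial.coeff_mul _ _ m
      rw [Finset.sum_congr rfl hRHS, Finset.sum_comm]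
      have hterm : ∀ p ∈ Finset.HasAntidiagonal.antidiagonal m,
          (∑ s ∈ Finset.Icc k₁ i, (W (i - s)).coeff p.1 * (g s).coeff p.2)
            = MvPowerSeries.coeff p.1 u * MvPowerSeries.coeff p.2 f := by
        intro p hp
        obtain ⟨a, b⟩ := p
        simp only [Finset.HasAntidiagonal.mem_antidiagonal] at hp
        have hab : a.degree + b.degree = i := by rw [← hdegadd, hp, hm]
        by_cases hbk : b.degree ∈ Finset.Icc k₁ i
        · rw [Finset.sum_eq_single b.degree]
          · have h1 : a.degree = i - b.degree := by omega
            have haN : a < N := by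
              apply hmN
              omega
            rw [hWcoeff _ a h1 haN, hgf b, hdeg]
          · intro s hs hsne
            rw [(hghom s).coeff_eq_zero (fun h => hsne (h ▸ rfl)), mul_zero]
          · intro h
            exact absurd hbk h
        · -- `b.degree < k₁`: both sides vanish
          simp only [Finset.mem_Icc, not_and_or, not_le] at hbk
          have hbk' : b.degree < k₁ := by
            rcases hbk with h | h
            · exact h
            · omega
          have hb0 : (g b.degree).coeff b = 0 := by rw [hlow _ hbk']; rfl
          have hf0 : MvPowerSeries.coeff b f = 0 := by
            rw [hgf b, hdeg, hb0]
          rw [hf0, mul_zero]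
          apply Finset.sum_eq_zero
          intro s hs
          have hsne : b.degree ≠ s := by
            simp only [Finset.mem_Icc] at hs
            omega
          rw [(hghom s).coeff_eq_zero hsne, mul_zero]
      rw [Finset.sum_congr rfl hterm]
      have : (∑ p ∈ Finset.HasAntidiagonal.antidiagonal m,
          MvPowerSeries.coeff p.1 u * MvPowerSeries.coeff p.2 f)
            = MvPowerSeries.coeff m (u * f) := (MvPowerSeries.coeff_mul m u f).symm
      rw [this, ← heq m, hgf m, hdeg, hm]
    · -- other coefficients: everything is homogeneous of degree `i`
      rw [(hghom i).coeff_eq_zero hm, mul_zero]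
      symm
      apply Finset.sum_eq_zero
      intro s hs
      simp only [Finset.mem_Icc] at hs
      have : (W (i - s) * g s).IsHomogeneous i := by
        have := (hWhom (i - s)).mul (hghom s)
        rwa [Nat.sub_add_cancel hs.2] at this
      exact this.coeff_eq_zero hm
  -- from degree `k₁`: the constant term of `u` is `ρ ^ k₁`
  have hW0 : W 0 = MvPolynomial.C (MvPowerSeries.coeff 0 u) := by
    show MvPolynomial.homogeneousComponent 0 T = _
    rw [MvPolynomial.homogeneousComponent_zero]
    congr 1
    have h0N : (0 : Fin n →₀ ℕ) < N := hmN 0 (by simp [map_zero])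
    rw [hT, MvPowerSeries.coeff_trunc, if_pos h0N]
  have hc : MvPowerSeries.coeff 0 u = ρ ^ k₁ := by
    have h1 := key k₁ le_rfl (by omega)
    rw [Finset.Icc_self, Finset.sum_singleton, Nat.sub_self, hW0] at h1
    have h2 : (MvPolynomial.C (ρ ^ k₁) - MvPolynomial.C (MvPowerSeries.coeff 0 u))
        * g k₁ = 0 := by
      rw [sub_mul, h1, sub_self]
    rcases mul_eq_zero.mp h2 with h | h
    · have h' := sub_eq_zero.mp h
      exact (MvPolynomial.C_injective (Fin n) ℂ h').symm
    · exact absurd h (hh₁ ▸ hne)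
  -- strong induction
  have main : ∀ i, i ≤ ℓ + k₁ - 1 → h₁ ∣ g i := by
    intro i
    induction i using Nat.strong_induction_on with
    | _ i IH =>
      intro hi
      rcases lt_trichotomy i k₁ with hik | rfl | hik
      · rw [hlow i hik]; exact dvd_zero _
      · exact hh₁ ▸ dvd_rfl
      · have hkey := key i (le_of_lt hik) hi
        have hi1 : i = (i - 1) + 1 := by omega
        rw [hi1, Finset.sum_Icc_succ_top (by omega : k₁ ≤ i - 1 + 1), ← hi1] at hkey
        rw [Nat.sub_self, hW0, hc] at hkey
        have hsplit : MvPolynomial.C (ρ ^ i - ρ ^ k₁) * g i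
            = ∑ s ∈ Finset.Icc k₁ (i - 1), W (i - s) * g s := by
          rw [map_sub, sub_mul, hkey]
          ring
        have hdvd : h₁ ∣ ∑ s ∈ Finset.Icc k₁ (i - 1), W (i - s) * g s := by
          apply Finset.dvd_sum
          intro s hs
          simp only [Finset.mem_Icc] at hs
          exact Dvd.dvd.mul_left (IH s (by omega) (by omega)) _
        rw [← hsplit] at hdvd
        have hnonz : ρ ^ i - ρ ^ k₁ ≠ 0 := by
          intro h
          have hpow : ρ ^ i = ρ ^ k₁ := sub_eq_zero.mp h
          have hρ0 : ρ ≠ 0 := hρ.ne_zero (by omega)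
          have h2 : ρ ^ (i - k₁) = 1 := by
            have : ρ ^ (k₁ + (i - k₁)) = ρ ^ k₁ * 1 := by
              rw [← Nat.add_sub_cancel' (le_of_lt hik)] at hpow
              rw [hpow, mul_one]
            rw [pow_add] at this
            exact mul_left_cancel₀ (pow_ne_zero _ hρ0) this
          exact hρ.pow_ne_one_of_pos_of_lt (by omega) (by omega) h2
        have hunit : IsUnit (MvPolynomial.C (ρ ^ i - ρ ^ k₁) :
            MvPolynomial (Fin n) ℂ) := (hnonz.isUnit).map MvPolynomial.C
        exact hunit.dvd_mul_left.mp hdvd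
  exact fun i _ hi => main i hi
end
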